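/- arXiv:0908.4468 — 4 statements merged into one kernel-verified Lean document; each statement's English description precedes it below -/
import Mathlib

section
/- If g : [0,∞) → [0,∞) is of strictly sublinear growth (i.e. g(x)/x → 0 as x → ∞), then its smallest concave majorant ḡ is also of strictly sublinear growth. -/
/-!
Fix `ε > 0`. Since `g x / x → 0` and `g ≤ ḡ` with `ḡ` concave (hence bounded above on compact
subintervals of `[0, ∞)`), there is a constant `C` with `g x ≤ C + ε x` on `[0, ∞)`. This affine
function is concave, so minimality gives `ḡ x ≤ C + ε x` as well, and `limsup ḡ x / x ≤ ε`.
From below, `ḡ x / x ≥ g x / x → 0`.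
-/

open Filter Set Topology

theorem ConcaveOn.bddAbove_image_inter_Icc {s : Set ℝ} {f : ℝ → ℝ} (hf : ConcaveOn ℝ s f)
    {a b c : ℝ} (hc : c ∈ s) (hbc : b < c) : BddAbove (f '' (s ∩ Icc a b)) := by
  set σ := (f c - f b) / (c - b)
  refine ⟨f b + (b - a) * |σ|, ?_⟩
  rintro _ ⟨x, ⟨hx, hax, hxb⟩, rfl⟩
  have secant : f x ≤ f b + (x - b) * σ := by
    rcases hxb.eq_or_lt with rfl | hxb
    · simp
    · have := hf.slope_anti_adjacent hx hc hxb hbc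
      rw [le_div_iff₀ (sub_pos.2 hxb)] at this
      linarith
  nlinarith [neg_abs_le σ, abs_nonneg σ]

theorem exists_le_const_add_mul_of_tendsto_div_atTop {g : ℝ → ℝ}
    (hg : Tendsto (fun x => g x / x) atTop (𝓝 0)) (hbdd : ∀ M, BddAbove (g '' Icc 0 M))
    {ε : ℝ} (hε : 0 < ε) : ∃ C, ∀ x, 0 ≤ x → g x ≤ C + ε * x := by
  obtain ⟨M, hM⟩ := eventually_atTop.1 ((hg.eventually_lt_const hε).and (eventually_gt_atTop 0))
  obtain ⟨C, hC⟩ := hbdd M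
  refine ⟨max C 0, fun x hx => ?_⟩
  rcases le_total x M with hxM | hMx
  · have := hC ⟨x, ⟨hx, hxM⟩, rfl⟩
    nlinarith [le_max_left C 0, le_max_right C 0]
  · obtain ⟨hgx, hx0⟩ := hM x hMx
    rw [div_lt_iff₀ hx0] at hgx
    linarith [le_max_right C 0]

theorem eventually_div_lt_of_le_const_add_mul {f : ℝ → ℝ} {C ε a : ℝ}
    (hf : ∀ x, 0 ≤ x → f x ≤ C + ε * x) (hεa : ε < a) : ∀ᶠ x in atTop, f x / x < a := by
  have h_lim : Tendsto (fun x => C / x + ε) atTop (𝓝 ε) := by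
    simpa using (tendsto_const_nhds.div_atTop tendsto_id).add_const ε
  filter_upwards [h_lim.eventually_lt_const hεa, eventually_gt_atTop 0] with x hx hx0
  calc f x / x ≤ (C + ε * x) / x := div_le_div_of_nonneg_right (hf x hx0.le) hx0.le
    _ = C / x + ε := by field_simp
    _ < a := hx

theorem smallest_concave_majorant_strictly_sublinear_general
    (g gbar : ℝ → ℝ)
    (hg_sublinear : Tendsto (fun x => g x / x) atTop (nhds 0))
    (h_concave : ConcaveOn ℝ (Set.Ici (0:ℝ)) gbar)
    (h_major : ∀ x, 0 ≤ x → g x ≤ gbar x)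
    (h_smallest : ∀ h : ℝ → ℝ, ConcaveOn ℝ (Set.Ici (0:ℝ)) h →
      (∀ x, 0 ≤ x → g x ≤ h x) → ∀ x, 0 ≤ x → gbar x ≤ h x) :
    Tendsto (fun x => gbar x / x) atTop (nhds 0) := by
  refine tendsto_order.2 ⟨fun a ha => ?_, fun a ha => ?_⟩
  · filter_upwards [hg_sublinear.eventually_const_lt ha, eventually_gt_atTop 0] with x hgx hx
    exact hgx.trans_le (div_le_div_of_nonneg_right (h_major x hx.le) hx.le)
  · have hg_bdd (M : ℝ) : BddAbove (g '' Icc 0 M) := by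
      obtain ⟨C, hC⟩ := h_concave.bddAbove_image_inter_Icc (a := 0)
        (mem_Ici.2 (by positivity : (0 : ℝ) ≤ |M| + 1)) ((le_abs_self M).trans_lt (lt_add_one _))
      refine ⟨C, ?_⟩
      rintro _ ⟨x, hx, rfl⟩
      exact (h_major x hx.1).trans (hC ⟨x, ⟨hx.1, hx⟩, rfl⟩)
    obtain ⟨C, hC⟩ := exists_le_const_add_mul_of_tendsto_div_atTop hg_sublinear hg_bdd (half_pos ha)
    have h_affine : ConcaveOn ℝ (Ici 0) (fun x => C + a / 2 * x) :=
      (concaveOn_const C (convex_Ici 0)).add ((concaveOn_id (convex_Ici 0)).smul (half_pos ha).le)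
    exact eventually_div_lt_of_le_const_add_mul (h_smallest _ h_affine hC) (half_lt_self ha)

/-- If `g : [0,∞) → [0,∞)` is of strictly sublinear growth, then its smallest
concave majorant `ḡ` is also of strictly sublinear growth. -/
theorem smallest_concave_majorant_strictly_sublinear
    (g gbar : ℝ → ℝ)
    (hg_nonneg : ∀ x, 0 ≤ x → 0 ≤ g x)
    (hg_sublinear : Tendsto (fun x => g x / x) atTop (nhds 0))
    (h_concave : ConcaveOn ℝ (Set.Ici (0:ℝ)) gbar)
    (h_major : ∀ x, 0 ≤ x → g x ≤ gbar x)
    (h_smallest : ∀ h : ℝ → ℝ, ConcaveOn ℝ (Set.Ici (0:ℝ)) h →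
      (∀ x, 0 ≤ x → g x ≤ h x) → ∀ x, 0 ≤ x → gbar x ≤ h x) :
    Tendsto (fun x => gbar x / x) atTop (nhds 0) :=
  smallest_concave_majorant_strictly_sublinear_general g gbar hg_sublinear h_concave h_major
    h_smallest
end

section
/- The function u(x,t) = x·(1 − 2Φ(−1/(xσ√(T−t)))) satisfies the partial differential equation u_t + (1/2)σ²x⁴u_{xx} = 0 for all x > 0 and t < T, where Φ is the standard normal cumulative distribution function. -/
/-!
With `E z = 1 - 2Φ(-z)` we have `E'' z = -z E' z`, which makes `w y t = E (y / (σ √(T - t)))` a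
similarity solution of the backward heat equation `w_t + σ²/2 w_yy = 0`. The bubble price is the
inversion `u x t = x w (1/x) t`: then `u_t = x w_t` and `u_xx = w_yy / x³`, so
`u_t + σ²x⁴/2 u_xx = x (w_t + σ²/2 w_yy) = 0`.
-/

open Real

/-- The standard normal cumulative distribution function. -/
noncomputable def stdNormalCDF (z : ℝ) : ℝ :=
  ∫ s in Set.Iic z, (2 * π) ^ (-(1:ℝ)/2) * exp (-s ^ 2 / 2)

open Filter Topology MeasureTheory Set

noncomputable def stdNormalPDF (z : ℝ) : ℝ := (2 * π) ^ (-(1:ℝ)/2) * exp (-z ^ 2 / 2)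

/-- `P(|Z| ≤ z)` for `z ≥ 0`, i.e. `erf (z / √2)`. -/
noncomputable def halfNormalCDF (z : ℝ) : ℝ := 1 - 2 * stdNormalCDF (-z)

theorem hasDerivAt_integral_Iic {E : Type*} [NormedAddCommGroup E] [NormedSpace ℝ E]
    [CompleteSpace E] {f : ℝ → E} (hf : Integrable f) (hc : Continuous f) (z : ℝ) :
    HasDerivAt (fun w => ∫ s in Iic w, f s) (f z) z := by
  have hsplit : (fun w => ∫ s in Iic w, f s)
      = fun w => (∫ s in Iic 0, f s) + ∫ s in (0:ℝ)..w, f s := by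
    funext w
    rw [← intervalIntegral.integral_Iic_sub_Iic hf.integrableOn hf.integrableOn, add_sub_cancel]
  rw [hsplit]
  exact (intervalIntegral.integral_hasDerivAt_right (hc.intervalIntegrable 0 z)
    (hc.stronglyMeasurableAtFilter _ _) hc.continuousAt).const_add _

theorem continuous_stdNormalPDF : Continuous stdNormalPDF := by
  unfold stdNormalPDF; fun_prop

theorem integrable_stdNormalPDF : Integrable stdNormalPDF := by
  refine ((integrable_exp_neg_mul_sq (by norm_num : (0:ℝ) < 1/2)).const_mul
    ((2 * π) ^ (-(1:ℝ)/2))).congr (Eventually.of_forall fun s => ?_)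
  simp only [stdNormalPDF]
  ring_nf

theorem stdNormalPDF_neg (z : ℝ) : stdNormalPDF (-z) = stdNormalPDF z := by
  simp only [stdNormalPDF, neg_sq]

theorem hasDerivAt_stdNormalPDF (z : ℝ) : HasDerivAt stdNormalPDF (-z * stdNormalPDF z) z := by
  refine ((((hasDerivAt_pow 2 z).neg.div_const 2).exp).const_mul
    ((2 * π) ^ (-(1:ℝ)/2))).congr_deriv ?_
  simp only [stdNormalPDF, Pi.neg_apply]
  ring

theorem hasDerivAt_stdNormalCDF (z : ℝ) : HasDerivAt stdNormalCDF (stdNormalPDF z) z :=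
  hasDerivAt_integral_Iic integrable_stdNormalPDF continuous_stdNormalPDF z

theorem hasDerivAt_halfNormalCDF (z : ℝ) : HasDerivAt halfNormalCDF (2 * stdNormalPDF z) z := by
  have h : HasDerivAt (fun z => 1 - 2 * stdNormalCDF (-z)) _ z :=
    (((hasDerivAt_stdNormalCDF (-z)).comp z (hasDerivAt_neg z)).const_mul 2).const_sub 1
  refine h.congr_deriv ?_
  rw [stdNormalPDF_neg]
  ring

theorem hasDerivAt_two_mul_stdNormalPDF (z : ℝ) :
    HasDerivAt (fun z => 2 * stdNormalPDF z) (-z * (2 * stdNormalPDF z)) z :=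
  ((hasDerivAt_stdNormalPDF z).const_mul 2).congr_deriv (by ring)

theorem deriv_deriv_mul_comp_inv {𝕜 : Type*} [NontriviallyNormedField 𝕜] {f : 𝕜 → 𝕜} {x : 𝕜}
    (hf : Differentiable 𝕜 f) (hf' : DifferentiableAt 𝕜 (deriv f) x⁻¹) (hx : x ≠ 0) :
    deriv (deriv fun y => y * f y⁻¹) x = deriv (deriv f) x⁻¹ / x ^ 3 := by
  have hfirst : ∀ y ≠ 0, HasDerivAt (fun y => y * f y⁻¹) (f y⁻¹ - deriv f y⁻¹ / y) y := by
    intro y hy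
    refine ((hasDerivAt_id' y).mul ((hf y⁻¹).hasDerivAt.comp y (hasDerivAt_inv hy))).congr_deriv ?_
    rw [Function.comp_apply]
    field_simp
    ring
  have heq : deriv (fun y => y * f y⁻¹) =ᶠ[𝓝 x] fun y => f y⁻¹ - deriv f y⁻¹ / y :=
    (eventually_ne_nhds hx).mono fun y hy => (hfirst y hy).deriv
  have hinv := hasDerivAt_inv hx
  have hsecond : HasDerivAt (fun y => f y⁻¹ - deriv f y⁻¹ / y) _ x :=
    ((hf x⁻¹).hasDerivAt.comp x hinv).sub ((hf'.hasDerivAt.comp x hinv).div (hasDerivAt_id x) hx)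
  rw [heq.deriv_eq, hsecond.deriv, Function.comp_apply]
  field_simp
  ring

theorem hasDerivAt_div_sqrt_sub {σ T t : ℝ} (y : ℝ) (hσ : σ ≠ 0) (ht : t < T) :
    HasDerivAt (fun s => y / (σ * √(T - s))) (y / (σ * √(T - t)) / (2 * (T - t))) t := by
  have hpos : 0 < T - t := sub_pos.2 ht
  have hsqrt : √(T - t) ≠ 0 := (sqrt_pos.2 hpos).ne'
  have h := (hasDerivAt_const t y).div
    ((((hasDerivAt_id' t).const_sub T).sqrt hpos.ne').const_mul σ) (mul_ne_zero hσ hsqrt)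
  refine h.congr_deriv ?_
  field_simp
  rw [sq_sqrt hpos.le]
  ring

section SimilaritySolution

variable {E E' : ℝ → ℝ}

theorem hasDerivAt_comp_div_const (hE : ∀ z, HasDerivAt E (E' z) z) (c z : ℝ) :
    HasDerivAt (fun z => E (z / c)) (E' (z / c) / c) z :=
  ((hE (z / c)).comp z ((hasDerivAt_id' z).div_const _)).congr_deriv (by ring)

theorem deriv_comp_div_const (hE : ∀ z, HasDerivAt E (E' z) z) (c : ℝ) :
    deriv (fun z => E (z / c)) = fun z => E' (z / c) / c :=
  funext fun z => (hasDerivAt_comp_div_const hE c z).deriv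

theorem differentiable_comp_div_const (hE : ∀ z, HasDerivAt E (E' z) z) (c : ℝ) :
    Differentiable ℝ fun z => E (z / c) :=
  fun z => (hasDerivAt_comp_div_const hE c z).differentiableAt

theorem differentiable_deriv_comp_div_const (hE : ∀ z, HasDerivAt E (E' z) z)
    (hE' : Differentiable ℝ E') (c : ℝ) : Differentiable ℝ (deriv fun z => E (z / c)) := by
  rw [deriv_comp_div_const hE]
  exact (hE'.comp (differentiable_id.div_const c)).div_const c

theorem comp_div_sqrt_solves_backward_heat (hE : ∀ z, HasDerivAt E (E' z) z)
    (hE' : ∀ z, HasDerivAt E' (-z * E' z) z) {σ T t : ℝ} (hσ : σ ≠ 0) (ht : t < T) (y : ℝ) :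
    deriv (fun s => E (y / (σ * √(T - s)))) t
      + σ ^ 2 / 2 * deriv (deriv fun z => E (z / (σ * √(T - t)))) y = 0 := by
  have hpos : 0 < T - t := sub_pos.2 ht
  have hc : σ * √(T - t) ≠ 0 := mul_ne_zero hσ (sqrt_pos.2 hpos).ne'
  have htime : HasDerivAt (fun s => E (y / (σ * √(T - s)))) _ t :=
    (hE _).comp t (hasDerivAt_div_sqrt_sub y hσ ht)
  rw [htime.deriv, deriv_comp_div_const hE,
    ((hasDerivAt_comp_div_const hE' _ y).div_const _).deriv]
  field_simp
  rw [sq_sqrt hpos.le]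
  ring

end SimilaritySolution

theorem bubble_price_solves_BS_general (σ T : ℝ) (hσ : 0 < σ) :
    ∀ x t : ℝ, 0 < x → t < T →
      (deriv (fun s => x * (1 - 2 * stdNormalCDF (-(1 / (x * σ * Real.sqrt (T - s)))))) t)
      + (1/2) * σ ^ 2 * x ^ 4 *
        (deriv (deriv (fun y =>
          y * (1 - 2 * stdNormalCDF (-(1 / (y * σ * Real.sqrt (T - t))))))) x) = 0 := by
  intro x t hx ht
  have hu_t : (fun s => x * (1 - 2 * stdNormalCDF (-(1 / (x * σ * √(T - s))))))
      = fun s => x * halfNormalCDF (x⁻¹ / (σ * √(T - s))) := by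
    funext s; unfold halfNormalCDF; ring_nf
  have hu_x : (fun y => y * (1 - 2 * stdNormalCDF (-(1 / (y * σ * √(T - t))))))
      = fun y => y * halfNormalCDF (y⁻¹ / (σ * √(T - t))) := by
    funext y; unfold halfNormalCDF; ring_nf
  have heat := comp_div_sqrt_solves_backward_heat hasDerivAt_halfNormalCDF
    hasDerivAt_two_mul_stdNormalPDF hσ.ne' ht x⁻¹
  have hdiff := differentiable_comp_div_const hasDerivAt_halfNormalCDF (σ * √(T - t))
  have hdiff' := differentiable_deriv_comp_div_const hasDerivAt_halfNormalCDF
    (fun z => (hasDerivAt_two_mul_stdNormalPDF z).differentiableAt) (σ * √(T - t))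
  rw [hu_t, hu_x, deriv_const_mul_field', deriv_deriv_mul_comp_inv hdiff (hdiff' _) hx.ne']
  have hscale (A B : ℝ) (h : A + σ ^ 2 / 2 * B = 0) :
      x * A + 1 / 2 * σ ^ 2 * x ^ 4 * (B / x ^ 3) = 0 := by
    field_simp
    linear_combination (2 * x) * h
  exact hscale _ _ heat

/-- `u(x,t) = x (1 − 2Φ(−1/(xσ√(T−t))))` satisfies `u_t + σ²x⁴u_{xx}/2 = 0` for
`x > 0`, `t < T`. -/
theorem bubble_price_solves_BS (σ T : ℝ) (hσ : 0 < σ) (hT : 0 < T) :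
    ∀ x t : ℝ, 0 < x → t < T →
      (deriv (fun s => x * (1 - 2 * stdNormalCDF (-(1 / (x * σ * Real.sqrt (T - s)))))) t)
      + (1/2) * σ ^ 2 * x ^ 4 *
        (deriv (deriv (fun y =>
          y * (1 - 2 * stdNormalCDF (-(1 / (y * σ * Real.sqrt (T - t))))))) x) = 0 :=
  bubble_price_solves_BS_general σ T hσ
end

section
/- Let a : [0,∞)×[0,T] → [0,∞) be continuous. Suppose v : [0,∞)×[0,T] → ℝ is continuous, is C^{2,1} on (0,∞)×(0,T], satisfies v_t = (1/2)a(x,t)²v_{xx} there, satisfies v(x,0) = 0 for all x ≥ 0 and v(0,t) = 0 for all t ∈ [0,T], and is of strictly sublinear growth, i.e. |v(x,t)| ≤ f(x) for some f with f(x)/x → 0 as x → ∞. Then v ≡ 0. -/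
/-!
Fix `ε > 0` and compare `v` with the barrier `h = ε e^t (1 + x)`, a strict supersolution since
`hₜ - ½ a² hₓₓ = h > 0`. By sublinear growth `v` lies below `h` for `x ≥ R` once `R` is large,
hence on the whole parabolic boundary of `[0, R] × [0, T]`. At an interior maximum of `v - h`
we would have `∂ₜ ≥ 0` and `∂ₓ² ≤ 0`, contradicting strictness, so `v ≤ h` everywhere.
Letting `ε → 0` gives `v ≤ 0`, and the same argument for `-v` gives `v ≥ 0`.
-/

open Filter Set Topology Real

theorem IsLocalMax.deriv_deriv_nonpos {f : ℝ → ℝ} {x₀ : ℝ} (h : IsLocalMax f x₀)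
    (hc : ContinuousAt f x₀) : deriv (deriv f) x₀ ≤ 0 := by
  by_contra! hpos
  -- The second-derivative test makes `x₀` a local min too, so `f` is locally constant.
  have hmin := isLocalMin_of_deriv_deriv_pos hpos h.deriv_eq_zero hc
  have hconst : f =ᶠ[𝓝 x₀] fun _ => f x₀ :=
    (h.and hmin).mono fun _ hx => le_antisymm hx.1 hx.2
  have hderiv : deriv f =ᶠ[𝓝 x₀] fun _ => 0 := hconst.deriv.mono fun _ hx => by simp [hx]
  simp [hderiv.deriv_eq] at hpos

theorem IsLocalMax.nonpos_of_hasDerivAt_of_hasDerivAt {f f' : ℝ → ℝ} {f'' x₀ : ℝ}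
    (h : IsLocalMax f x₀) (hf : ∀ᶠ x in 𝓝 x₀, HasDerivAt f (f' x) x)
    (hf' : HasDerivAt f' f'' x₀) : f'' ≤ 0 := by
  have hd : deriv f =ᶠ[𝓝 x₀] f' := hf.mono fun _ hx => hx.deriv
  have := h.deriv_deriv_nonpos hf.self_of_nhds.continuousAt
  rwa [hd.deriv_eq, hf'.deriv] at this

theorem HasDerivAt.nonneg_of_eventually_le_left {g : ℝ → ℝ} {g' t₀ : ℝ}
    (hd : HasDerivAt g g' t₀) (hmax : ∀ᶠ t in 𝓝[<] t₀, g t ≤ g t₀) : 0 ≤ g' := by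
  refine ge_of_tendsto ((hasDerivAt_iff_tendsto_slope.mp hd).mono_left (nhdsLT_le_nhdsNE t₀)) ?_
  filter_upwards [hmax, self_mem_nhdsWithin] with t hgt ht
  rw [slope_def_field]
  exact div_nonneg_of_nonpos (sub_nonpos.2 hgt) (sub_nonpos.2 ht.le)

theorem le_of_parabolic_boundary_of_strict_subsolution
    {u ut ux uxx c : ℝ → ℝ → ℝ} {x₁ x₂ t₁ t₂ M : ℝ}
    (hcont : ContinuousOn (fun p : ℝ × ℝ => u p.1 p.2) (Icc x₁ x₂ ×ˢ Icc t₁ t₂))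
    (hut : ∀ x ∈ Ioo x₁ x₂, ∀ t ∈ Ioc t₁ t₂, HasDerivAt (fun s => u x s) (ut x t) t)
    (hux : ∀ x ∈ Ioo x₁ x₂, ∀ t ∈ Ioc t₁ t₂, HasDerivAt (fun y => u y t) (ux x t) x)
    (huxx : ∀ x ∈ Ioo x₁ x₂, ∀ t ∈ Ioc t₁ t₂,
      HasDerivAt (fun y => ux y t) (uxx x t) x)
    (hc : ∀ x ∈ Ioo x₁ x₂, ∀ t ∈ Ioc t₁ t₂, 0 ≤ c x t)
    (hsub : ∀ x ∈ Ioo x₁ x₂, ∀ t ∈ Ioc t₁ t₂, ut x t < c x t * uxx x t)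
    (hinit : ∀ x ∈ Icc x₁ x₂, u x t₁ ≤ M)
    (hleft : ∀ t ∈ Icc t₁ t₂, u x₁ t ≤ M)
    (hright : ∀ t ∈ Icc t₁ t₂, u x₂ t ≤ M) :
    ∀ x ∈ Icc x₁ x₂, ∀ t ∈ Icc t₁ t₂, u x t ≤ M := by
  intro x hx t ht
  obtain ⟨⟨x₀, t₀⟩, ⟨hx₀, ht₀⟩, hmax⟩ :=
    (isCompact_Icc.prod isCompact_Icc).exists_isMaxOn ⟨(x, t), hx, ht⟩ hcont
  have hle_max : ∀ y ∈ Icc x₁ x₂, ∀ s ∈ Icc t₁ t₂, u y s ≤ u x₀ t₀ :=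
    fun y hy s hs => isMaxOn_iff.mp hmax (y, s) ⟨hy, hs⟩
  refine (hle_max x hx t ht).trans ?_
  rcases ht₀.1.eq_or_lt with rfl | ht₁
  · exact hinit x₀ hx₀
  rcases hx₀.1.eq_or_lt with rfl | hx₁
  · exact hleft t₀ ht₀
  rcases hx₀.2.eq_or_lt with rfl | hx₂
  · exact hright t₀ ht₀
  exfalso
  have hx₀' : x₀ ∈ Ioo x₁ x₂ := ⟨hx₁, hx₂⟩
  have ht₀' : t₀ ∈ Ioc t₁ t₂ := ⟨ht₁, ht₀.2⟩
  have huxx_nonpos : uxx x₀ t₀ ≤ 0 := by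
    refine IsLocalMax.nonpos_of_hasDerivAt_of_hasDerivAt (f := fun y => u y t₀) ?_ ?_
      (huxx x₀ hx₀' t₀ ht₀')
    · filter_upwards [Ioo_mem_nhds hx₁ hx₂] with y hy
      exact hle_max y (Ioo_subset_Icc_self hy) t₀ ht₀
    · filter_upwards [Ioo_mem_nhds hx₁ hx₂] with y hy using hux y hy t₀ ht₀'
  have hut_nonneg : 0 ≤ ut x₀ t₀ := by
    refine (hut x₀ hx₀' t₀ ht₀').nonneg_of_eventually_le_left ?_
    filter_upwards [Ioo_mem_nhdsLT ht₁] with s hs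
    exact hle_max x₀ hx₀ s ⟨hs.1.le, hs.2.le.trans ht₀.2⟩
  exact (hsub x₀ hx₀' t₀ ht₀').not_ge
    ((mul_nonpos_of_nonneg_of_nonpos (hc x₀ hx₀' t₀ ht₀') huxx_nonpos).trans hut_nonneg)

theorem exists_le_mul_of_tendsto_div_atTop_zero {f : ℝ → ℝ}
    (hf : Tendsto (fun x => f x / x) atTop (𝓝 0)) {ε : ℝ} (hε : 0 < ε) :
    ∃ R, 0 ≤ R ∧ ∀ x, R ≤ x → f x ≤ ε * x := by
  obtain ⟨R, hR⟩ :=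
    eventually_atTop.1 ((hf.eventually (gt_mem_nhds hε)).and (eventually_gt_atTop 0))
  refine ⟨max R 0, le_max_right _ _, fun x hx => ?_⟩
  obtain ⟨hlt, hpos⟩ := hR x (le_of_max_le_left hx)
  exact ((div_lt_iff₀ hpos).1 hlt).le

structure IsBlackScholesSolution (T : ℝ) (a v vt vx vxx : ℝ → ℝ → ℝ) : Prop where
  hasDerivAt_t : ∀ x ∈ Ioi (0:ℝ), ∀ t ∈ Ioc (0:ℝ) T,
    HasDerivAt (fun s => v x s) (vt x t) t
  hasDerivAt_x : ∀ x ∈ Ioi (0:ℝ), ∀ t ∈ Ioc (0:ℝ) T,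
    HasDerivAt (fun y => v y t) (vx x t) x
  hasDerivAt_xx : ∀ x ∈ Ioi (0:ℝ), ∀ t ∈ Ioc (0:ℝ) T,
    HasDerivAt (fun y => vx y t) (vxx x t) x
  pde : ∀ x ∈ Ioi (0:ℝ), ∀ t ∈ Ioc (0:ℝ) T, vt x t = (1/2) * (a x t) ^ 2 * vxx x t

namespace IsBlackScholesSolution

variable {T : ℝ} {a v vt vx vxx : ℝ → ℝ → ℝ}

theorem neg (hsol : IsBlackScholesSolution T a v vt vx vxx) :
    IsBlackScholesSolution T a (fun x t => -v x t) (fun x t => -vt x t) (fun x t => -vx x t)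
      (fun x t => -vxx x t) where
  hasDerivAt_t x hx t ht := (hsol.hasDerivAt_t x hx t ht).neg
  hasDerivAt_x x hx t ht := (hsol.hasDerivAt_x x hx t ht).neg
  hasDerivAt_xx x hx t ht := (hsol.hasDerivAt_xx x hx t ht).neg
  pde x hx t ht := by rw [hsol.pde x hx t ht]; ring

variable {f : ℝ → ℝ}
  (hsol : IsBlackScholesSolution T a v vt vx vxx)
  (hv_cont : ContinuousOn (fun p : ℝ × ℝ => v p.1 p.2) (Ici 0 ×ˢ Icc 0 T))
  (hinit : ∀ x, 0 ≤ x → v x 0 ≤ 0) (hbdry : ∀ t ∈ Icc (0:ℝ) T, v 0 t ≤ 0)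
  (hgrowth : ∀ x, 0 ≤ x → ∀ t ∈ Icc (0:ℝ) T, v x t ≤ f x)
  (hf : Tendsto (fun x => f x / x) atTop (𝓝 0))
include hsol hv_cont hinit hbdry hgrowth hf

theorem le_barrier {ε : ℝ} (hε : 0 < ε) :
    ∀ x, 0 ≤ x → ∀ t ∈ Icc (0:ℝ) T, v x t ≤ ε * exp t * (1 + x) := by
  obtain ⟨R, hR, hfR⟩ := exists_le_mul_of_tendsto_div_atTop_zero hf hε
  have hfar : ∀ x, R ≤ x → ∀ t ∈ Icc (0:ℝ) T, v x t ≤ ε * exp t * (1 + x) := by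
    intro x hx t ht
    calc v x t ≤ ε * x := (hgrowth x (hR.trans hx) t ht).trans (hfR x hx)
      _ ≤ ε * 1 * (1 + x) := by linarith
      _ ≤ ε * exp t * (1 + x) := by gcongr <;> linarith [one_le_exp ht.1]
  intro x hx t ht
  rcases le_or_gt R x with hxR | hxR
  · exact hfar x hxR t ht
  have hcont : ContinuousOn (fun p : ℝ × ℝ => v p.1 p.2 - ε * exp p.2 * (1 + p.1))
      (Icc 0 R ×ˢ Icc 0 T) :=
    (hv_cont.mono (prod_mono Icc_subset_Ici_self subset_rfl)).sub (by fun_prop)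
  have hbarrier_pos : ∀ x, 0 ≤ x → ∀ t, 0 < ε * exp t * (1 + x) :=
    fun x hx t => by positivity
  have hbarrier_t : ∀ x t, HasDerivAt (fun s => ε * exp s * (1 + x)) (ε * exp t * (1 + x)) t :=
    fun x t => ((hasDerivAt_exp t).const_mul ε).mul_const (1 + x)
  have hbarrier_x : ∀ x t, HasDerivAt (fun y => ε * exp t * (1 + y)) (ε * exp t) x :=
    fun x t => by simpa using ((hasDerivAt_id x).const_add 1).const_mul (ε * exp t)
  have hu := le_of_parabolic_boundary_of_strict_subsolution
    (u := fun x t => v x t - ε * exp t * (1 + x)) (ux := fun x t => vx x t - ε * exp t)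
    (uxx := vxx) (c := fun x t => (1/2) * (a x t) ^ 2) (M := 0) hcont
    (fun x hx t ht => (hsol.hasDerivAt_t x hx.1 t ht).sub (hbarrier_t x t))
    (fun x hx t ht => (hsol.hasDerivAt_x x hx.1 t ht).sub (hbarrier_x x t))
    (fun x hx t ht => (hsol.hasDerivAt_xx x hx.1 t ht).sub_const _)
    (fun x _ t _ => by positivity)
    (fun x hx t ht => by rw [hsol.pde x hx.1 t ht]; exact sub_lt_self _ (hbarrier_pos x hx.1.le t))
    (fun x hx => sub_nonpos.2 ((hinit x hx.1).trans (hbarrier_pos x hx.1 0).le))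
    (fun t ht => sub_nonpos.2 ((hbdry t ht).trans (hbarrier_pos 0 le_rfl t).le))
    (fun t ht => sub_nonpos.2 (hfar R le_rfl t ht)) x ⟨hx, hxR.le⟩ t ht
  exact sub_nonpos.1 hu

theorem nonpos : ∀ x, 0 ≤ x → ∀ t ∈ Icc (0:ℝ) T, v x t ≤ 0 := by
  intro x hx t ht
  have hlim : Tendsto (fun ε => ε * exp t * (1 + x)) (𝓝[>] 0) (𝓝 0) := by
    refine tendsto_nhdsWithin_of_tendsto_nhds ?_
    exact ((continuous_id.mul continuous_const).mul continuous_const).tendsto' _ _ (by simp)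
  exact ge_of_tendsto hlim (eventually_mem_nhdsWithin.mono fun ε hε =>
    le_barrier hsol hv_cont hinit hbdry hgrowth hf hε x hx t ht)

end IsBlackScholesSolution

theorem BS_uniqueness_strictly_sublinear_general
    (T : ℝ)
    (a : ℝ → ℝ → ℝ)
    (v vt vx vxx : ℝ → ℝ → ℝ)
    (hv_cont : ContinuousOn (fun p : ℝ × ℝ => v p.1 p.2) (Set.Ici 0 ×ˢ Set.Icc 0 T))
    (hvt : ∀ x ∈ Set.Ioi (0:ℝ), ∀ t ∈ Set.Ioc (0:ℝ) T,
      HasDerivAt (fun s => v x s) (vt x t) t)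
    (hvx : ∀ x ∈ Set.Ioi (0:ℝ), ∀ t ∈ Set.Ioc (0:ℝ) T,
      HasDerivAt (fun y => v y t) (vx x t) x)
    (hvxx : ∀ x ∈ Set.Ioi (0:ℝ), ∀ t ∈ Set.Ioc (0:ℝ) T,
      HasDerivAt (fun y => vx y t) (vxx x t) x)
    (hpde : ∀ x ∈ Set.Ioi (0:ℝ), ∀ t ∈ Set.Ioc (0:ℝ) T,
      vt x t = (1/2) * (a x t) ^ 2 * vxx x t)
    (hinit : ∀ x, 0 ≤ x → v x 0 = 0)
    (hbdry : ∀ t ∈ Set.Icc (0:ℝ) T, v 0 t = 0)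
    (f : ℝ → ℝ)
    (hgrowth : ∀ x, 0 ≤ x → ∀ t ∈ Set.Icc (0:ℝ) T, |v x t| ≤ f x)
    (hf_sublinear : Tendsto (fun x => f x / x) atTop (nhds 0)) :
    ∀ x, 0 ≤ x → ∀ t ∈ Set.Icc (0:ℝ) T, v x t = 0 := by
  have hsol : IsBlackScholesSolution T a v vt vx vxx := ⟨hvt, hvx, hvxx, hpde⟩
  intro x hx t ht
  have hle := hsol.nonpos hv_cont (fun x hx => (hinit x hx).le) (fun t ht => (hbdry t ht).le)
    (fun x hx t ht => (le_abs_self _).trans (hgrowth x hx t ht)) hf_sublinear x hx t ht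
  have hge := hsol.neg.nonpos hv_cont.neg (fun x hx => by simp [hinit x hx])
    (fun t ht => by simp [hbdry t ht])
    (fun x hx t ht => (neg_le_abs _).trans (hgrowth x hx t ht)) hf_sublinear x hx t ht
  linarith

/-- Uniqueness for the Black–Scholes equation in the class of functions of
strictly sublinear growth: a continuous solution of `v_t = a²v_{xx}/2` on
`(0,∞)×(0,T]` with zero initial and boundary data which is of strictly sublinear
growth vanishes identically. -/
theorem BS_uniqueness_strictly_sublinear
    (T : ℝ) (hT : 0 < T)
    (a : ℝ → ℝ → ℝ)
    (ha_cont : ContinuousOn (fun p : ℝ × ℝ => a p.1 p.2) (Set.Ici 0 ×ˢ Set.Icc 0 T))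
    (ha_nonneg : ∀ x ∈ Set.Ici (0:ℝ), ∀ t ∈ Set.Icc (0:ℝ) T, 0 ≤ a x t)
    (v vt vx vxx : ℝ → ℝ → ℝ)
    (hv_cont : ContinuousOn (fun p : ℝ × ℝ => v p.1 p.2) (Set.Ici 0 ×ˢ Set.Icc 0 T))
    (hvt : ∀ x ∈ Set.Ioi (0:ℝ), ∀ t ∈ Set.Ioc (0:ℝ) T,
      HasDerivAt (fun s => v x s) (vt x t) t)
    (hvx : ∀ x ∈ Set.Ioi (0:ℝ), ∀ t ∈ Set.Ioc (0:ℝ) T,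
      HasDerivAt (fun y => v y t) (vx x t) x)
    (hvxx : ∀ x ∈ Set.Ioi (0:ℝ), ∀ t ∈ Set.Ioc (0:ℝ) T,
      HasDerivAt (fun y => vx y t) (vxx x t) x)
    (hpde : ∀ x ∈ Set.Ioi (0:ℝ), ∀ t ∈ Set.Ioc (0:ℝ) T,
      vt x t = (1/2) * (a x t) ^ 2 * vxx x t)
    (hinit : ∀ x, 0 ≤ x → v x 0 = 0)
    (hbdry : ∀ t ∈ Set.Icc (0:ℝ) T, v 0 t = 0)
    (f : ℝ → ℝ) (hf_nonneg : ∀ x, 0 ≤ x → 0 ≤ f x)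
    (hgrowth : ∀ x, 0 ≤ x → ∀ t ∈ Set.Icc (0:ℝ) T, |v x t| ≤ f x)
    (hf_sublinear : Tendsto (fun x => f x / x) atTop (nhds 0)) :
    ∀ x, 0 ≤ x → ∀ t ∈ Set.Icc (0:ℝ) T, v x t = 0 :=
  BS_uniqueness_strictly_sublinear_general T a v vt vx vxx hv_cont hvt hvx hvxx hpde hinit hbdry f
    hgrowth hf_sublinear
end

section
/- Let ε > 0, η > 2 and 0 < β < 1, and choose η' ∈ (2, η). Then there exist m > 1 and constants c > 0, M ≥ 1 such that for all x ≥ c and all t ∈ [0,T], M x + (ε/2)(1+β)β x^{β−1+η}(T−t)^m + (ε/2)β(1−β)x^{2β−1+η}(T−t)^{2m} ≥ m x^{β+1}(T−t)^{m−1} + m x^{2β+1}(T−t)^{2m−1}. -/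
/-!
Write `s = T - t`; both right-hand terms have the shape `m x^(a+1) s^(n-1)`, with `(a, n)` equal
to `(β, m)` and `(2β, 2m)`. When `s ≥ x^(2-η')`, one more factor `s` costs at least
`x^(2-η')`, so the matching left-hand term `A x^(a-1+η) s^n` dominates as soon as
`A x^(η-η') ≥ m`, which holds for large `x`. When `s ≤ x^(2-η')`, the choice
`m = 1 + β/(η'-2)` makes `x^(a+1) s^(n-1) ≤ x`, so the term is absorbed by `M x` with `M = 2m`.
-/

open Real Filter

section

variable {x s m A a n η η' : ℝ}

lemma mul_rpow_le_of_rpow_le (hx : 0 < x) (hs : x ^ (2 - η') ≤ s) (hA : 0 ≤ A)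
    (hm : m ≤ A * x ^ (η - η')) :
    m * x ^ (a + 1) * s ^ (n - 1) ≤ A * x ^ (a - 1 + η) * s ^ n := by
  have hs0 : 0 < s := (rpow_pos_of_pos hx _).trans_le hs
  have hxs : 1 ≤ x ^ (η' - 2) * s :=
    calc 1 = x ^ (η' - 2) * x ^ (2 - η') := by rw [← rpow_add hx]; norm_num
      _ ≤ x ^ (η' - 2) * s := by gcongr
  have hsplit : x ^ (a - 1 + η) * s ^ n
      = x ^ (η - η') * x ^ (a + 1) * s ^ (n - 1) * (x ^ (η' - 2) * s) := by
    rw [rpow_sub_one hs0.ne', show a - 1 + η = η - η' + (a + 1) + (η' - 2) by ring,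
      rpow_add hx, rpow_add hx]
    field_simp
  calc m * x ^ (a + 1) * s ^ (n - 1)
      ≤ A * x ^ (η - η') * x ^ (a + 1) * s ^ (n - 1) := by gcongr
    _ ≤ A * x ^ (η - η') * x ^ (a + 1) * s ^ (n - 1) * (x ^ (η' - 2) * s) :=
      le_mul_of_one_le_right (by positivity) hxs
    _ = A * (x ^ (a - 1 + η) * s ^ n) := by rw [hsplit]; ring
    _ = A * x ^ (a - 1 + η) * s ^ n := (mul_assoc ..).symm

lemma rpow_mul_rpow_le_self (hx : 1 ≤ x) (hs0 : 0 ≤ s) (hs : s ≤ x ^ (2 - η')) (hn : 1 ≤ n)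
    (ha : a ≤ (η' - 2) * (n - 1)) : x ^ (a + 1) * s ^ (n - 1) ≤ x := by
  have hx0 : 0 < x := one_pos.trans_le hx
  calc x ^ (a + 1) * s ^ (n - 1)
      ≤ x ^ (a + 1) * (x ^ (2 - η')) ^ (n - 1) := by gcongr
    _ = x ^ (a + 1 + (2 - η') * (n - 1)) := by rw [rpow_add hx0 (a + 1), rpow_mul hx0.le]
    _ ≤ x ^ (1 : ℝ) := rpow_le_rpow_of_exponent_le hx (by nlinarith)
    _ = x := rpow_one x

lemma mul_rpow_le_add (hx : 1 ≤ x) (hs : 0 ≤ s) (hm0 : 0 ≤ m) (hA : 0 ≤ A)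
    (hm : m ≤ A * x ^ (η - η')) (hn : 1 ≤ n) (ha : a ≤ (η' - 2) * (n - 1)) :
    m * x ^ (a + 1) * s ^ (n - 1) ≤ A * x ^ (a - 1 + η) * s ^ n + m * x := by
  rcases le_total (x ^ (2 - η')) s with hlong | hshort
  · have := mul_rpow_le_of_rpow_le (a := a) (n := n) (one_pos.trans_le hx) hlong hA hm
    have : 0 ≤ m * x := by positivity
    linarith
  · have := mul_le_mul_of_nonneg_left (rpow_mul_rpow_le_self hx hs hshort hn ha) hm0
    have : 0 ≤ A * x ^ (a - 1 + η) * s ^ n := by positivity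
    linarith

end

theorem supersolution_inequality_general (T : ℝ)
    (ε η β η' : ℝ) (hε : 0 < ε) (hβ0 : 0 < β) (hβ1 : β < 1)
    (hη'1 : 2 < η') (hη'2 : η' < η) :
    ∃ m : ℝ, 1 < m ∧ ∃ c : ℝ, 0 < c ∧ ∃ M : ℝ, 1 ≤ M ∧
      ∀ x : ℝ, c ≤ x → ∀ t ∈ Set.Icc (0:ℝ) T,
        M * x + (ε/2) * (1+β) * β * x ^ (β - 1 + η) * (T - t) ^ m
          + (ε/2) * β * (1-β) * x ^ (2*β - 1 + η) * (T - t) ^ (2*m)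
        ≥ m * x ^ (β + 1) * (T - t) ^ (m - 1)
          + m * x ^ (2*β + 1) * (T - t) ^ (2*m - 1) := by
  set m := 1 + β / (η' - 2) with hm
  have hβm : β = (η' - 2) * (m - 1) := by
    rw [hm, add_sub_cancel_left, mul_div_cancel₀ _ (sub_pos.2 hη'1).ne']
  have hm1 : 1 < m := by rw [hm]; linarith [div_pos hβ0 (sub_pos.2 hη'1)]
  have hA₁ : 0 < ε / 2 * (1 + β) * β := by positivity
  have hA₂ : 0 < ε / 2 * β * (1 - β) := mul_pos (by positivity) (sub_pos.2 hβ1)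
  have large : ∀ A > 0, ∀ᶠ x in atTop, m ≤ A * x ^ (η - η') := fun A hA =>
    ((tendsto_rpow_atTop (sub_pos.2 hη'2)).const_mul_atTop hA).eventually_ge_atTop m
  obtain ⟨c, hc⟩ := eventually_atTop.1
    ((eventually_ge_atTop 1).and ((large _ hA₁).and (large _ hA₂)))
  refine ⟨m, hm1, max c 1, by positivity, 2 * m, by linarith, fun x hx t ht => ?_⟩
  obtain ⟨hx1, hxA₁, hxA₂⟩ := hc x (le_of_max_le_left hx)
  have hs : 0 ≤ T - t := sub_nonneg.2 ht.2
  have first := mul_rpow_le_add hx1 hs (by linarith) hA₁.le hxA₁ hm1.le hβm.le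
  have second := mul_rpow_le_add (a := 2 * β) (n := 2 * m) hx1 hs (by linarith) hA₂.le hxA₂
    (by linarith) (by linarith)
  linarith

/-- The key algebraic inequality (15) used in the strict local martingale
criterion: for `ε > 0`, `η > 2`, `0 < β < 1` and `η' ∈ (2, η)`, there exist
`m > 1`, `c > 0` and `M ≥ 1` such that the supersolution inequality holds for
all `x ≥ c` and `t ∈ [0,T]`. -/
theorem supersolution_inequality (T : ℝ) (hT : 0 < T)
    (ε η β η' : ℝ) (hε : 0 < ε) (hη : 2 < η) (hβ0 : 0 < β) (hβ1 : β < 1)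
    (hη'1 : 2 < η') (hη'2 : η' < η) :
    ∃ m : ℝ, 1 < m ∧ ∃ c : ℝ, 0 < c ∧ ∃ M : ℝ, 1 ≤ M ∧
      ∀ x : ℝ, c ≤ x → ∀ t ∈ Set.Icc (0:ℝ) T,
        M * x + (ε/2) * (1+β) * β * x ^ (β - 1 + η) * (T - t) ^ m
          + (ε/2) * β * (1-β) * x ^ (2*β - 1 + η) * (T - t) ^ (2*m)
        ≥ m * x ^ (β + 1) * (T - t) ^ (m - 1)
          + m * x ^ (2*β + 1) * (T - t) ^ (2*m - 1) :=
  supersolution_inequality_general T ε η β η' hε hβ0 hβ1 hη'1 hη'2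
end
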